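/- Let f : ℝ^d → ℝ be L-smooth and let h : ℝ^d → ℝ^d be any L-Lipschitz map. Fix w ∈ ℝ^d with h(w) ≠ 0, ρ > 0, η > 0, and a mask m ∈ {0,1}^d. Set w̃ = w + ρ·(h(w)/‖h(w)‖) ⊙ m and e = ρ·(h(w)/‖h(w)‖) ⊙ (1 − m). Then f(w − η·h(w̃)) ≤ f(w) − (Lη²/2)‖∇f(w)‖² + Lη²‖∇f(w) − h(w)‖² + 2η²L³·(ρ² + ‖e‖²) − (1 − Lη)·η·⟨∇f(w), h(w̃)⟩. -/

import Mathlib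

/-! The descent lemma `f (x + v) ≤ f x + ⟪∇f x, v⟫ + (L/2)‖v‖²`, applied to the step `v = -η u` with
`u = h w̃` and combined with `‖u‖² = ‖u - ∇f w‖² + 2⟪∇f w, u⟫ - ‖∇f w‖²`, leaves the error term
`(Lη²/2)‖u - ∇f w‖²`. Normalising and masking do not increase norms, so `‖w̃ - w‖ ≤ ρ` and the
Lipschitz bound on `h` gives `‖u - ∇f w‖ ≤ L‖w̃ - w‖ + ‖∇f w - h w‖`; `(a + b)² ≤ 2(a² + b²)`
finishes. -/

open RealInnerProductSpace

/-- Componentwise (Hadamard) product on `EuclideanSpace ℝ (Fin d)`. -/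
noncomputable def hadamard {d : ℕ} (x y : EuclideanSpace ℝ (Fin d)) :
    EuclideanSpace ℝ (Fin d) :=
  (EuclideanSpace.equiv (Fin d) ℝ).symm (fun i => x i * y i)

/-- The all-ones vector in `EuclideanSpace ℝ (Fin d)`. -/
noncomputable def onesVec (d : ℕ) : EuclideanSpace ℝ (Fin d) :=
  (EuclideanSpace.equiv (Fin d) ℝ).symm (fun _ => 1)

theorem hadamard_apply {d : ℕ} (x y : EuclideanSpace ℝ (Fin d)) (i : Fin d) :
    hadamard x y i = x i * y i := rfl

theorem norm_hadamard_le {d : ℕ} (x m : EuclideanSpace ℝ (Fin d)) (hm : ∀ i, |m i| ≤ 1) :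
    ‖hadamard x m‖ ≤ ‖x‖ := by
  refine le_of_sq_le_sq ?_ (norm_nonneg x)
  rw [EuclideanSpace.real_norm_sq_eq, EuclideanSpace.real_norm_sq_eq]
  refine Finset.sum_le_sum fun i _ => ?_
  rw [hadamard_apply, mul_pow]
  exact mul_le_of_le_one_right (sq_nonneg _) ((sq_le_one_iff_abs_le_one _).mpr (hm i))

theorem norm_div_norm_smul_le {E : Type*} [NormedAddCommGroup E] [NormedSpace ℝ E]
    (ρ : ℝ) (x : E) : ‖(ρ / ‖x‖) • x‖ ≤ |ρ| := by
  rw [norm_smul, Real.norm_eq_abs, abs_div, abs_norm]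
  rcases eq_or_ne ‖x‖ 0 with hx | hx
  · simp [hx]
  · rw [div_mul_cancel₀ _ hx]

section Smooth

variable {E : Type*} [NormedAddCommGroup E] [InnerProductSpace ℝ E] [CompleteSpace E]
  {f : E → ℝ} {L : ℝ}

theorem le_add_inner_gradient_add_sq_of_lipschitz_gradient (hf : Differentiable ℝ f)
    (hsmooth : ∀ x y, ‖gradient f x - gradient f y‖ ≤ L * ‖x - y‖) (x v : E) :
    f (x + v) ≤ f x + ⟪gradient f x, v⟫ + L / 2 * ‖v‖ ^ 2 := by
  set φ : ℝ → ℝ := fun t => f (x + t • v) - t * ⟪gradient f x, v⟫ - L / 2 * t ^ 2 * ‖v‖ ^ 2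
  set φ' : ℝ → ℝ := fun t => ⟪gradient f (x + t • v) - gradient f x, v⟫ - L * t * ‖v‖ ^ 2
  have hderiv : ∀ t, HasDerivAt φ (φ' t) t := by
    intro t
    have hline : HasDerivAt (fun t : ℝ => x + t • v) v t := by
      simpa using ((hasDerivAt_id t).smul_const v).const_add x
    have hf_line := ((hf _).hasGradientAt.hasFDerivAt).comp_hasDerivAt t hline
    have := ((hf_line.sub ((hasDerivAt_id t).mul_const ⟪gradient f x, v⟫)).sub
      (((hasDerivAt_pow 2 t).const_mul (L / 2)).mul_const (‖v‖ ^ 2)))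
    refine (this : HasDerivAt φ _ t).congr_deriv ?_
    simp only [φ', inner_sub_left, InnerProductSpace.toDual_apply_apply, one_mul,
      show ((2 : ℕ) : ℝ) * t ^ (2 - 1) = 2 * t by norm_num]
    ring
  have hφ'_nonpos : ∀ t ∈ interior (Set.Ici (0 : ℝ)), φ' t ≤ 0 := by
    intro t ht
    rw [interior_Ici, Set.mem_Ioi] at ht
    have hdist : ‖(x + t • v) - x‖ = t * ‖v‖ := by
      simp [norm_smul, abs_of_pos ht]
    calc φ' t ≤ ‖gradient f (x + t • v) - gradient f x‖ * ‖v‖ - L * t * ‖v‖ ^ 2 :=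
          sub_le_sub_right (real_inner_le_norm _ _) _
      _ ≤ L * ‖(x + t • v) - x‖ * ‖v‖ - L * t * ‖v‖ ^ 2 := by
          gcongr
          exact hsmooth _ _
      _ = 0 := by rw [hdist]; ring
  have hanti : AntitoneOn φ (Set.Ici 0) :=
    antitoneOn_of_hasDerivWithinAt_nonpos (convex_Ici 0)
      (fun t _ => (hderiv t).continuousAt.continuousWithinAt)
      (fun t _ => (hderiv t).hasDerivWithinAt) hφ'_nonpos
  have := hanti Set.self_mem_Ici (Set.mem_Ici.mpr zero_le_one) zero_le_one
  simp only [φ, one_smul, zero_smul, add_zero, one_mul, zero_mul, sub_zero] at this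
  linarith

theorem le_sub_smul_of_lipschitz_gradient (hf : Differentiable ℝ f)
    (hsmooth : ∀ x y, ‖gradient f x - gradient f y‖ ≤ L * ‖x - y‖) (x u : E) (η : ℝ) :
    f (x - η • u) ≤ f x - (L * η ^ 2 / 2) * ‖gradient f x‖ ^ 2
      + (L * η ^ 2 / 2) * ‖u - gradient f x‖ ^ 2 - (1 - L * η) * η * ⟪gradient f x, u⟫ := by
  have hdesc := le_add_inner_gradient_add_sq_of_lipschitz_gradient hf hsmooth x (-(η • u))
  rw [← sub_eq_add_neg, inner_neg_right, real_inner_smul_right, norm_neg, norm_smul,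
    Real.norm_eq_abs, mul_pow, sq_abs] at hdesc
  have hsplit := norm_sub_sq_real u (gradient f x)
  rw [real_inner_comm] at hsplit
  linear_combination hdesc - (L * η ^ 2 / 2) * hsplit

end Smooth

theorem ssam_one_step_descent_det_general {d : ℕ}
    (f : EuclideanSpace ℝ (Fin d) → ℝ) (L : ℝ) (hL : 0 < L)
    (hdiff : Differentiable ℝ f)
    (hsmooth : ∀ w v : EuclideanSpace ℝ (Fin d),
      ‖gradient f w - gradient f v‖ ≤ L * ‖w - v‖)
    (h : EuclideanSpace ℝ (Fin d) → EuclideanSpace ℝ (Fin d))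
    (hhlip : ∀ w v : EuclideanSpace ℝ (Fin d), ‖h w - h v‖ ≤ L * ‖w - v‖)
    (w : EuclideanSpace ℝ (Fin d))
    (ρ η : ℝ)
    (m : EuclideanSpace ℝ (Fin d)) (hm : ∀ i, m i = 0 ∨ m i = 1) :
    f (w - η • h (w + hadamard ((ρ / ‖h w‖) • h w) m))
      ≤ f w - (L * η ^ 2 / 2) * ‖gradient f w‖ ^ 2
        + L * η ^ 2 * ‖gradient f w - h w‖ ^ 2
        + 2 * η ^ 2 * L ^ 3 *
            (ρ ^ 2 + ‖hadamard ((ρ / ‖h w‖) • h w) (onesVec d - m)‖ ^ 2)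
        - (1 - L * η) * η *
            ⟪gradient f w, h (w + hadamard ((ρ / ‖h w‖) • h w) m)⟫ := by
  set p := hadamard ((ρ / ‖h w‖) • h w) m
  set u := h (w + p)
  have hp : ‖p‖ ^ 2 ≤ ρ ^ 2 := by
    refine sq_le_sq.mpr ((abs_norm p).trans_le ?_)
    exact (norm_hadamard_le _ m fun i => by rcases hm i with hi | hi <;> simp [hi]).trans
      (norm_div_norm_smul_le ρ (h w))
  have hu : ‖u - gradient f w‖ ≤ L * ‖p‖ + ‖gradient f w - h w‖ :=
    calc ‖u - gradient f w‖ ≤ ‖u - h w‖ + ‖h w - gradient f w‖ :=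
          norm_sub_le_norm_sub_add_norm_sub _ _ _
      _ ≤ L * ‖p‖ + ‖gradient f w - h w‖ := by
          gcongr
          · simpa using hhlip (w + p) w
          · exact (norm_sub_rev _ _).le
  have hu_sq : ‖u - gradient f w‖ ^ 2 ≤ 2 * ((L * ‖p‖) ^ 2 + ‖gradient f w - h w‖ ^ 2) :=
    (pow_le_pow_left₀ (norm_nonneg _) hu 2).trans add_sq_le
  have hstep := le_sub_smul_of_lipschitz_gradient hdiff hsmooth w u η
  linear_combination hstep + mul_le_mul_of_nonneg_left hu_sq (by positivity : 0 ≤ L * η ^ 2 / 2)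
    + mul_le_mul_of_nonneg_left hp (by positivity : 0 ≤ η ^ 2 * L ^ 3)
    + mul_nonneg (by positivity : 0 ≤ η ^ 2 * L ^ 3)
      (by positivity : 0 ≤ ρ ^ 2 + 2 * ‖hadamard ((ρ / ‖h w‖) • h w) (onesVec d - m)‖ ^ 2)

/-- Deterministic one-step sparse SAM descent inequality: for `L`-smooth `f`, any
`L`-Lipschitz map `h`, `w` with `h(w) ≠ 0`, `ρ > 0`, `η > 0`, mask `m ∈ {0,1}^d`,
`w̃ = w + ρ·(h(w)/‖h(w)‖) ⊙ m` and `e = ρ·(h(w)/‖h(w)‖) ⊙ (1 − m)`, we have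
`f(w − η·h(w̃)) ≤ f(w) − (Lη²/2)‖∇f(w)‖² + Lη²‖∇f(w) − h(w)‖² + 2η²L³(ρ² + ‖e‖²)
  − (1 − Lη)·η·⟪∇f(w), h(w̃)⟫`. -/
theorem ssam_one_step_descent_det {d : ℕ} (hd : 1 ≤ d)
    (f : EuclideanSpace ℝ (Fin d) → ℝ) (L : ℝ) (hL : 0 < L)
    (hdiff : Differentiable ℝ f)
    (hsmooth : ∀ w v : EuclideanSpace ℝ (Fin d),
      ‖gradient f w - gradient f v‖ ≤ L * ‖w - v‖)
    (h : EuclideanSpace ℝ (Fin d) → EuclideanSpace ℝ (Fin d))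
    (hhlip : ∀ w v : EuclideanSpace ℝ (Fin d), ‖h w - h v‖ ≤ L * ‖w - v‖)
    (w : EuclideanSpace ℝ (Fin d)) (hw : h w ≠ 0)
    (ρ η : ℝ) (hρ : 0 < ρ) (hη : 0 < η)
    (m : EuclideanSpace ℝ (Fin d)) (hm : ∀ i, m i = 0 ∨ m i = 1) :
    f (w - η • h (w + hadamard ((ρ / ‖h w‖) • h w) m))
      ≤ f w - (L * η ^ 2 / 2) * ‖gradient f w‖ ^ 2
        + L * η ^ 2 * ‖gradient f w - h w‖ ^ 2
        + 2 * η ^ 2 * L ^ 3 *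
            (ρ ^ 2 + ‖hadamard ((ρ / ‖h w‖) • h w) (onesVec d - m)‖ ^ 2)
        - (1 - L * η) * η *
            ⟪gradient f w, h (w + hadamard ((ρ / ‖h w‖) • h w) m)⟫ :=
  ssam_one_step_descent_det_general f L hL hdiff hsmooth h hhlip w ρ η m hm
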